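/- arXiv:2002.05297 — 3 statements merged into one kernel-verified Lean document; each statement's English description precedes it below -/
import Mathlib

section
/- Suppose b, c ∈ M = {x : Ψ(x) = 0} are both nearest points on M to a point x (so ‖x−b‖ = ‖x−c‖ = d(x,M)), with x − b = G_Ψ(b)ᵀ t_b for some t_b ∈ ℝ^s, ‖Ψ(c) − Ψ(b) − G_Ψ(b)(c−b)‖ ≤ (K/2)‖b−c‖², and K‖t_b‖ < 1. Then b = c. -/
open Metric Set

/-!
Two nearest points `b, c` are equidistant from `x`, so expanding `‖x - c‖² = ‖(x - b) - (c - b)‖²`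
gives `‖c - b‖² = 2 ⟪x - b, c - b⟫`. Since `x - b = Gᵀ t` is normal to `M` at `b`, this inner product
is `⟪t, G (c - b)⟫`, and `G (c - b) = -(Ψ c - Ψ b - G (c - b))` is quadratically small by the Taylor
bound. Hence `‖c - b‖² ≤ K ‖t‖ ‖c - b‖²`, which forces `c = b` when `K ‖t‖ < 1`.
-/

open scoped RealInnerProductSpace

section InnerProductSpace

variable {E F : Type*} [NormedAddCommGroup E] [InnerProductSpace ℝ E]
  [NormedAddCommGroup F] [InnerProductSpace ℝ F]

theorem norm_sub_sq_eq_two_inner_of_dist_eq {x b c : E} (h : dist x b = dist x c) :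
    ‖c - b‖ ^ 2 = 2 * ⟪x - b, c - b⟫ := by
  have hsq : ‖x - c‖ ^ 2 = ‖x - b‖ ^ 2 - 2 * ⟪x - b, c - b⟫ + ‖c - b‖ ^ 2 := by
    rw [← norm_sub_sq_real, sub_sub_sub_cancel_right]
  rw [dist_eq_norm, dist_eq_norm] at h
  rw [h] at hsq
  linarith

theorem eq_of_dist_eq_of_sub_eq_adjoint [CompleteSpace E] [CompleteSpace F]
    (G : E →L[ℝ] F) {x b c : E} {t : F} {K : ℝ} (hdist : dist x b = dist x c)
    (hnormal : x - b = ContinuousLinearMap.adjoint G t)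
    (hG : ‖G (c - b)‖ ≤ K / 2 * ‖c - b‖ ^ 2) (hsmall : K * ‖t‖ < 1) :
    b = c := by
  have hle : ‖c - b‖ ^ 2 ≤ K * ‖t‖ * ‖c - b‖ ^ 2 :=
    calc ‖c - b‖ ^ 2 = 2 * ⟪t, G (c - b)⟫ := by
          rw [norm_sub_sq_eq_two_inner_of_dist_eq hdist, hnormal,
            ContinuousLinearMap.adjoint_inner_left]
      _ ≤ 2 * (‖t‖ * ‖G (c - b)‖) := by gcongr; exact real_inner_le_norm _ _
      _ ≤ 2 * (‖t‖ * (K / 2 * ‖c - b‖ ^ 2)) := by gcongr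
      _ = K * ‖t‖ * ‖c - b‖ ^ 2 := by ring
  have hzero : ‖c - b‖ ^ 2 ≤ 0 :=
    nonpos_of_mul_nonpos_right (by linarith : (1 - K * ‖t‖) * ‖c - b‖ ^ 2 ≤ 0) (by linarith)
  have : ‖c - b‖ = 0 := pow_eq_zero_iff two_ne_zero |>.mp (le_antisymm hzero (by positivity))
  exact (sub_eq_zero.mp (norm_eq_zero.mp this)).symm

end InnerProductSpace

theorem unique_projection_of_small_curvature_general
    (d s : ℕ)
    (Ψ : EuclideanSpace ℝ (Fin d) → EuclideanSpace ℝ (Fin s))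
    (M : Set (EuclideanSpace ℝ (Fin d)))
    (hM : M = {x | Ψ x = 0})
    (x b c : EuclideanSpace ℝ (Fin d)) (tb : EuclideanSpace ℝ (Fin s))
    (Gb : EuclideanSpace ℝ (Fin d) →L[ℝ] EuclideanSpace ℝ (Fin s))
    (hb : b ∈ M) (hc : c ∈ M)
    (hbproj : dist x b = infDist x M) (hcproj : dist x c = infDist x M)
    (htb : x - b = (ContinuousLinearMap.adjoint Gb) tb)
    (K : ℝ)
    (hTaylor : ‖Ψ c - Ψ b - Gb (c - b)‖ ≤ K / 2 * ‖b - c‖ ^ 2)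
    (hsmall : K * ‖tb‖ < 1) :
    b = c := by
  subst hM
  have hG : ‖Gb (c - b)‖ ≤ K / 2 * ‖c - b‖ ^ 2 := by
    rwa [show Ψ c = 0 from hc, show Ψ b = 0 from hb, sub_zero, zero_sub, norm_neg,
      norm_sub_rev b c] at hTaylor
  exact eq_of_dist_eq_of_sub_eq_adjoint Gb (hbproj.trans hcproj.symm) htb hG hsmall

/-- If `b, c ∈ M = {x : Ψ x = 0}` are both nearest points on `M` to a
point `x` (so `‖x−b‖ = ‖x−c‖ = d(x,M)`), if `x − b = G_Ψ(b)ᵀ t_b` for some `t_b ∈ ℝ^s`,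
if the quadratic Taylor bound `‖Ψ c − Ψ b − G_Ψ(b)(c−b)‖ ≤ (K/2)‖b−c‖²` holds, and if
`K ‖t_b‖ < 1`, then `b = c`. -/
theorem unique_projection_of_small_curvature
    (d s : ℕ)
    (Ψ : EuclideanSpace ℝ (Fin d) → EuclideanSpace ℝ (Fin s))
    (M : Set (EuclideanSpace ℝ (Fin d)))
    (hM : M = {x | Ψ x = 0})
    (x b c : EuclideanSpace ℝ (Fin d)) (tb : EuclideanSpace ℝ (Fin s))
    (Gb : EuclideanSpace ℝ (Fin d) →L[ℝ] EuclideanSpace ℝ (Fin s))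
    (hGb : Gb = fderiv ℝ Ψ b)
    (hb : b ∈ M) (hc : c ∈ M)
    (hbproj : dist x b = infDist x M) (hcproj : dist x c = infDist x M)
    (htb : x - b = (ContinuousLinearMap.adjoint Gb) tb)
    (K : ℝ) (hK : 0 < K)
    (hTaylor : ‖Ψ c - Ψ b - Gb (c - b)‖ ≤ K / 2 * ‖b - c‖ ^ 2)
    (hsmall : K * ‖tb‖ < 1) :
    b = c :=
  unique_projection_of_small_curvature_general d s Ψ M hM x b c tb Gb hb hc hbproj hcproj htb K
    hTaylor hsmall
end

section
/- Let f : ℝ^d → ℝ be C², f ≥ 0, with zero set M nonempty and ∇f vanishing on M. Suppose x₀ has a nearest point x_M ∈ M with ‖x₀ − x_M‖ = d(x₀, M), that vᵀH_f(y)v ≥ μ‖v‖² for v = x₀ − x_M and all y on the segment [x_M, x₀] (with μ > 0). Then ‖∇f(x₀)‖ ≥ μ · d(x₀, M). -/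
open Metric Set

/-!
Along the segment from `x_M` to `x₀`, the function `t ↦ ⟪v, ∇f(x_M + t v)⟫` with
`v = x₀ - x_M` has derivative `⟪v, H_f v⟫ ≥ μ ‖v‖²` and vanishes at `t = 0`, so by the mean
value theorem `⟪v, ∇f(x₀)⟫ ≥ μ ‖v‖²`. Cauchy–Schwarz turns this into `‖∇f(x₀)‖ ≥ μ ‖v‖`, and
`‖v‖ = d(x₀, M)` because `x_M` is a nearest point.
-/

open scoped RealInnerProductSpace

variable {E : Type*} [NormedAddCommGroup E] [InnerProductSpace ℝ E]

theorem ContDiff.gradient [CompleteSpace E] {f : E → ℝ} {m n : WithTop ℕ∞}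
    (hf : ContDiff ℝ n f) (hmn : m + 1 ≤ n) : ContDiff ℝ m (gradient f) :=
  (InnerProductSpace.toDual ℝ E).symm.toContinuousLinearEquiv.contDiff.comp
    (hf.fderiv_right hmn)

theorem mul_norm_sq_le_inner_sub_of_le_inner_fderiv {G : E → E} {a b : E} {μ : ℝ}
    (hG : ∀ y ∈ segment ℝ a b, DifferentiableAt ℝ G y)
    (hμ : ∀ y ∈ segment ℝ a b, μ * ‖b - a‖ ^ 2 ≤ ⟪b - a, fderiv ℝ G y (b - a)⟫) :
    μ * ‖b - a‖ ^ 2 ≤ ⟪b - a, G b - G a⟫ := by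
  set v := b - a
  have hmem : ∀ t ∈ Icc (0 : ℝ) 1, a + t • v ∈ segment ℝ a b := fun t ht => by
    rw [segment_eq_image']
    exact ⟨t, ht, rfl⟩
  have hderiv : ∀ t ∈ Icc (0 : ℝ) 1,
      HasDerivAt (fun t : ℝ => ⟪v, G (a + t • v)⟫) ⟪v, fderiv ℝ G (a + t • v) v⟫ t := by
    intro t ht
    have hline : HasDerivAt (fun t : ℝ => a + t • v) v t := by
      simpa using ((hasDerivAt_id t).smul_const v).const_add a
    exact (innerSL ℝ v).hasFDerivAt.comp_hasDerivAt t
      ((hG _ (hmem t ht)).hasFDerivAt.comp_hasDerivAt t hline)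
  obtain ⟨c, hc, hslope⟩ := exists_hasDerivAt_eq_slope _ _ zero_lt_one
    (fun t ht => (hderiv t ht).continuousAt.continuousWithinAt)
    (fun t ht => hderiv t (Ioo_subset_Icc_self ht))
  have hend : a + v = b := add_sub_cancel a b
  calc μ * ‖v‖ ^ 2 ≤ ⟪v, fderiv ℝ G (a + c • v) v⟫ := hμ _ (hmem c (Ioo_subset_Icc_self hc))
    _ = ⟪v, G b - G a⟫ := by simp [hslope, hend, inner_sub_right]

theorem mul_norm_le_norm_of_mul_norm_sq_le_inner {v w : E} {μ : ℝ}
    (h : μ * ‖v‖ ^ 2 ≤ ⟪v, w⟫) : μ * ‖v‖ ≤ ‖w‖ := by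
  rcases (norm_nonneg v).eq_or_lt with hv | hv
  · simp [← hv]
  have : μ * ‖v‖ * ‖v‖ ≤ ‖w‖ * ‖v‖ := by
    nlinarith [real_inner_le_norm v w]
  exact le_of_mul_le_mul_right this hv

theorem grad_norm_lower_bound_general
    (n : ℕ)
    (f : EuclideanSpace ℝ (Fin n) → ℝ)
    (hf : ContDiff ℝ 2 f)
    (M : Set (EuclideanSpace ℝ (Fin n)))
    (μ : ℝ)
    (x₀ xM : EuclideanSpace ℝ (Fin n))
    (hproj : dist x₀ xM = infDist x₀ M)
    (hgradM : gradient f xM = 0)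
    (hHess : ∀ y ∈ segment ℝ xM x₀,
      μ * ‖x₀ - xM‖ ^ 2 ≤
        inner (𝕜 := ℝ) (x₀ - xM) (fderiv ℝ (fun z => gradient f z) y (x₀ - xM))) :
    μ * infDist x₀ M ≤ ‖gradient f x₀‖ := by
  have hG : Differentiable ℝ (gradient f) := (hf.gradient le_rfl).differentiable one_ne_zero
  rw [← hproj, dist_eq_norm]
  apply mul_norm_le_norm_of_mul_norm_sq_le_inner
  simpa [hgradM] using
    mul_norm_sq_le_inner_sub_of_le_inner_fderiv (fun y _ => hG y) hHess

/-- Let `f : ℝ^d → ℝ` be `C²`, `f ≥ 0`, with zero set `M` nonempty and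
`∇f` vanishing on `M`.  Suppose `x₀` has a nearest point `x_M ∈ M` with
`‖x₀ − x_M‖ = d(x₀, M)`, and that `vᵀ H_f(y) v ≥ μ ‖v‖²` for `v = x₀ − x_M` and all `y`
on the segment `[x_M, x₀]` (with `μ > 0`).  Then `‖∇f(x₀)‖ ≥ μ · d(x₀, M)`. -/
theorem grad_norm_lower_bound
    (n : ℕ)
    (f : EuclideanSpace ℝ (Fin n) → ℝ)
    (hf : ContDiff ℝ 2 f) (hf0 : ∀ x, 0 ≤ f x)
    (M : Set (EuclideanSpace ℝ (Fin n)))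
    (hM : M = {x | f x = 0}) (hMne : M.Nonempty)
    (μ : ℝ) (hμ : 0 < μ)
    (x₀ xM : EuclideanSpace ℝ (Fin n))
    (hxM : xM ∈ M) (hproj : dist x₀ xM = infDist x₀ M)
    (hgradM : gradient f xM = 0)
    (hHess : ∀ y ∈ segment ℝ xM x₀,
      μ * ‖x₀ - xM‖ ^ 2 ≤
        inner (𝕜 := ℝ) (x₀ - xM) (fderiv ℝ (fun z => gradient f z) y (x₀ - xM))) :
    μ * infDist x₀ M ≤ ‖gradient f x₀‖ :=
  grad_norm_lower_bound_general n f hf M μ x₀ xM hproj hgradM hHess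
end

section
/- One-step distance contraction for gradient descent toward the zero set: let f : ℝ^d → ℝ be C², f ≥ 0, with zero set M, and let x_t have nearest point x_{t,M} ∈ M. Suppose (i) (x_t − x_{t,M})ᵀ∇f(x_t) ≥ f(x_t) + (μ/2)‖x_t − x_{t,M}‖², and (ii) ‖∇f(x_t)‖² ≤ 2L f(x_t). Then for step size γ with γμ ≤ 1 and γL ≤ 1, the next iterate x_{t+1} = x_t − γ∇f(x_t) satisfies d(x_{t+1}, M)² ≤ (1 − γμ) d(x_t, M)². -/
open Metric

/-- **One-step distance contraction.**
Let `f : ℝ^d → ℝ` be `C²`, `f ≥ 0`, with zero set `M`, and let `x_t` have nearest point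
`x_{t,M} ∈ M`.  Suppose (i) `(x_t − x_{t,M})ᵀ ∇f(x_t) ≥ f(x_t) + (μ/2)‖x_t − x_{t,M}‖²`
and (ii) `‖∇f(x_t)‖² ≤ 2 L f(x_t)`.  Then for step size `γ > 0` with `γμ ≤ 1` and
`γL ≤ 1`, the next iterate `x_{t+1} = x_t − γ∇f(x_t)` satisfies
`d(x_{t+1}, M)² ≤ (1 − γμ) d(x_t, M)²`. -/
theorem one_step_distance_contraction
    (n : ℕ)
    (f : EuclideanSpace ℝ (Fin n) → ℝ)
    (hf : ContDiff ℝ 2 f) (hf0 : ∀ x, 0 ≤ f x)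
    (M : Set (EuclideanSpace ℝ (Fin n)))
    (hM : M = {x | f x = 0})
    (μ L γ : ℝ) (hμ : 0 < μ) (hL : 0 < L) (hγ : 0 < γ)
    (hγμ : γ * μ ≤ 1) (hγL : γ * L ≤ 1)
    (xt xtM : EuclideanSpace ℝ (Fin n))
    (hxtM : xtM ∈ M) (hproj : dist xt xtM = infDist xt M)
    (hi : f xt + μ / 2 * ‖xt - xtM‖ ^ 2 ≤ inner (𝕜 := ℝ) (xt - xtM) (gradient f xt))
    (hii : ‖gradient f xt‖ ^ 2 ≤ 2 * L * f xt) :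
    infDist (xt - γ • gradient f xt) M ^ 2 ≤ (1 - γ * μ) * infDist xt M ^ 2 := by
  set g := gradient f xt with hg
  have hMne : M.Nonempty := ⟨xtM, hxtM⟩
  have h1 : infDist (xt - γ • g) M ≤ ‖xt - γ • g - xtM‖ := by
    have := infDist_le_dist_of_mem (x := xt - γ • g) hxtM
    simpa [dist_eq_norm] using this
  have h0 : 0 ≤ infDist (xt - γ • g) M := infDist_nonneg
  have hsq : infDist (xt - γ • g) M ^ 2 ≤ ‖xt - γ • g - xtM‖ ^ 2 := by
    exact pow_le_pow_left₀ h0 h1 2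
  have hexp : ‖xt - γ • g - xtM‖ ^ 2
      = ‖xt - xtM‖ ^ 2 - 2 * γ * inner (𝕜 := ℝ) (xt - xtM) g + γ ^ 2 * ‖g‖ ^ 2 := by
    have : xt - γ • g - xtM = (xt - xtM) - γ • g := by abel
    rw [this, norm_sub_sq_real, real_inner_smul_right, norm_smul]
    simp [abs_of_pos hγ]
    ring
  have hf0' := hf0 xt
  have key : ‖xt - γ • g - xtM‖ ^ 2 ≤ (1 - γ * μ) * ‖xt - xtM‖ ^ 2 := by
    rw [hexp]
    have h2 : γ ^ 2 * ‖g‖ ^ 2 ≤ γ ^ 2 * (2 * L * f xt) := by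
      nlinarith
    have h3 : γ ^ 2 * (2 * L * f xt) ≤ γ * (2 * f xt) := by
      nlinarith [mul_nonneg (mul_nonneg hγ.le hf0') (sub_nonneg.2 hγL)]
    nlinarith [hi, mul_le_mul_of_nonneg_left hi (by positivity : (0:ℝ) ≤ 2 * γ)]
  have hfin : (1 - γ * μ) * ‖xt - xtM‖ ^ 2 = (1 - γ * μ) * infDist xt M ^ 2 := by
    rw [← hproj, dist_eq_norm]
  linarith [hsq, key, hfin.le, hfin.ge]
end
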